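/- arXiv:math/9910105 — 2 statements merged into one kernel-verified Lean document; each statement's English description precedes it below -/
import Mathlib

section
/- The function F₃ : ℝ³ → ℝ defined by F₃(s,λ,r) = (1/2048)·cos(8s)·e^{8λ} + (3/128)·cosh(4s)·e^{−8λ} − (1/32)·(s·sinh(4s) − 4λ·cosh(4s) + 12r·sinh(4s))·e^{−8λ} − (49/2048 − λ/4 + (3/64)·(16r − s)² + λ²)·e^{8λ} satisfies the partial differential equation ∂³F₃/∂s²∂λ + ∂²F₃/∂λ² + (4/3)·∂²F₃/∂s∂r − 8·∂²F₃/∂s² − 16·∂F₃/∂λ + 64·F₃ = 0 at every point of ℝ³. -/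
/-!
The operator factors as `∂ₛ²(∂_λ - 8) + (∂_λ - 8)² + (4/3)∂ₛ∂ᵣ`, as the relation factors as
`α²(β - 8) + (β - 8)² + (4/3)αγ`. Write `F₃ = e^{8λ} A + e^{-8λ} B`; conjugation by the
exponentials turns `∂_λ - 8` into `∂_λ` on `A` and into `∂_λ - 16` on `B`.
Since `∂_λ A = 1/4 - 2λ` and `∂ₛ∂ᵣ A = 3/2`, the `e^{8λ}` part is `-2 + (4/3)(3/2) = 0`.
For the `e^{-8λ}` part, `∂_λ B = cosh (4s) / 8`, `∂ₛ∂ᵣ B = -(3/2) cosh (4s)` and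
`∂ₛ² B = 16 B - cosh (4s) / 4`, and the three contributions cancel.
-/

noncomputable def F₃ (s l r : ℝ) : ℝ :=
  (1 / 2048) * Real.cos (8 * s) * Real.exp (8 * l)
    + (3 / 128) * Real.cosh (4 * s) * Real.exp (-8 * l)
    - (1 / 32) * (s * Real.sinh (4 * s) - 4 * l * Real.cosh (4 * s)
        + 12 * r * Real.sinh (4 * s)) * Real.exp (-8 * l)
    - (49 / 2048 - l / 4 + (3 / 64) * (16 * r - s) ^ 2 + l ^ 2) * Real.exp (8 * l)

open Real

lemma deriv_F₃_l (s l r : ℝ) :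
    deriv (fun l' => F₃ s l' r) l =
      (cos (8 * s) / 256 + 15 / 256 - 3 / 8 * (16 * r - s) ^ 2 - 8 * l ^ 2) * exp (8 * l)
        + (s * sinh (4 * s) / 4 + 3 * r * sinh (4 * s) - cosh (4 * s) / 16
          - l * cosh (4 * s)) * exp (-8 * l) := by
  simp (disch := fun_prop) only [F₃, deriv_fun_add, deriv_fun_sub, deriv_fun_mul, deriv_div_const,
      deriv_const', deriv_id'', deriv_fun_pow, deriv_const_mul_id', _root_.deriv_exp,
      _root_.deriv_cos, _root_.deriv_cosh, _root_.deriv_sinh]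
  ring

lemma deriv_F₃_r (s l r : ℝ) :
    deriv (fun r' => F₃ s l r') r =
      -(3 / 2) * (16 * r - s) * exp (8 * l) - 3 / 8 * sinh (4 * s) * exp (-8 * l) := by
  simp (disch := fun_prop) only [F₃, deriv_fun_add, deriv_fun_sub, deriv_fun_mul, deriv.fun_neg',
      deriv_div_const, deriv_const', deriv_fun_pow, deriv_const_mul_id', _root_.deriv_exp,
      _root_.deriv_cos, _root_.deriv_cosh, _root_.deriv_sinh]
  ring

lemma iteratedDeriv_two_F₃_l (s l r : ℝ) :
    iteratedDeriv 2 (fun l' => F₃ s l' r) l =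
      (cos (8 * s) / 32 + 15 / 32 - 3 * (16 * r - s) ^ 2 - 16 * l - 64 * l ^ 2) * exp (8 * l)
        + (8 * l * cosh (4 * s) - cosh (4 * s) / 2 - 2 * s * sinh (4 * s)
          - 24 * r * sinh (4 * s)) * exp (-8 * l) := by
  have h_deriv : deriv (fun l' => F₃ s l' r) = fun l' =>
      (cos (8 * s) / 256 + 15 / 256 - 3 / 8 * (16 * r - s) ^ 2 - 8 * l' ^ 2) * exp (8 * l')
        + (s * sinh (4 * s) / 4 + 3 * r * sinh (4 * s) - cosh (4 * s) / 16
          - l' * cosh (4 * s)) * exp (-8 * l') :=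
    funext (deriv_F₃_l s · r)
  rw [iteratedDeriv_succ, iteratedDeriv_one, h_deriv]
  simp (disch := fun_prop) only [deriv_fun_add, deriv_fun_sub, deriv_fun_mul, deriv_div_const,
      deriv_const', deriv_id'', deriv_fun_pow, deriv_const_mul_id', _root_.deriv_exp,
      _root_.deriv_cos, _root_.deriv_cosh, _root_.deriv_sinh]
  ring

lemma iteratedDeriv_two_F₃_s (s l r : ℝ) :
    iteratedDeriv 2 (fun s' => F₃ s' l r) s =
      -(3 + cos (8 * s)) / 32 * exp (8 * l)
        + (cosh (4 * s) / 8 - s * sinh (4 * s) / 2 + 2 * l * cosh (4 * s)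
          - 6 * r * sinh (4 * s)) * exp (-8 * l) := by
  have h_deriv : deriv (fun s' => F₃ s' l r) = fun s' =>
      (3 / 32 * (16 * r - s') - sin (8 * s') / 256) * exp (8 * l)
        + (sinh (4 * s') / 16 - s' * cosh (4 * s') / 8 + l * sinh (4 * s') / 2
          - 3 / 2 * r * cosh (4 * s')) * exp (-8 * l) := by
    funext s'
    simp (disch := fun_prop) only [F₃, deriv_fun_add, deriv_fun_sub, deriv_fun_mul, deriv.fun_neg',
        deriv_div_const, deriv_const', deriv_id'', deriv_fun_pow, deriv_const_mul_id',
        deriv_const_sub_id', _root_.deriv_exp, _root_.deriv_cos, _root_.deriv_cosh,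
        _root_.deriv_sinh]
    ring
  rw [iteratedDeriv_succ, iteratedDeriv_one, h_deriv]
  simp (disch := fun_prop) only [deriv_fun_add, deriv_fun_sub, deriv_fun_mul, deriv.fun_neg',
      deriv_div_const, deriv_const', deriv_id'', deriv_const_mul_id', deriv_const_sub_id',
      _root_.deriv_exp, _root_.deriv_sin, _root_.deriv_cosh, _root_.deriv_sinh]
  ring

lemma iteratedDeriv_two_deriv_F₃_l (s l r : ℝ) :
    iteratedDeriv 2 (fun s' => deriv (fun l' => F₃ s' l' r) l) s =
      -(3 + cos (8 * s)) / 4 * exp (8 * l)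
        + (cosh (4 * s) + 4 * (s + 12 * r) * sinh (4 * s) - 16 * l * cosh (4 * s))
          * exp (-8 * l) := by
  have h_deriv : deriv (fun s' => deriv (fun l' => F₃ s' l' r) l) = fun s' =>
      (3 / 4 * (16 * r - s') - sin (8 * s') / 32) * exp (8 * l)
        + ((s' + 12 * r) * cosh (4 * s') - 4 * l * sinh (4 * s')) * exp (-8 * l) := by
    funext s'
    simp (disch := fun_prop) only [deriv_F₃_l, deriv_fun_add, deriv_fun_sub, deriv_fun_mul,
        deriv.fun_neg', deriv_div_const, deriv_const', deriv_id'', deriv_fun_pow,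
        deriv_const_mul_id', deriv_const_sub_id', _root_.deriv_exp, _root_.deriv_cos,
        _root_.deriv_cosh, _root_.deriv_sinh]
    ring
  rw [iteratedDeriv_succ, iteratedDeriv_one, h_deriv]
  simp (disch := fun_prop) only [deriv_fun_add, deriv_fun_sub, deriv_fun_mul, deriv.fun_neg',
      deriv_div_const, deriv_const', deriv_id'', deriv_const_mul_id', deriv_const_sub_id',
      _root_.deriv_exp, _root_.deriv_sin, _root_.deriv_cosh, _root_.deriv_sinh]
  ring

lemma deriv_deriv_F₃_r (s l r : ℝ) :
    deriv (fun s' => deriv (fun r' => F₃ s' l r') r) s =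
      3 / 2 * (exp (8 * l) - cosh (4 * s) * exp (-8 * l)) := by
  simp (disch := fun_prop) only [deriv_F₃_r, deriv_fun_sub, deriv_fun_mul, deriv.fun_neg',
      deriv_div_const, deriv_const', deriv_const_mul_id', deriv_const_sub_id', _root_.deriv_exp,
      _root_.deriv_sinh]
  ring

/-- F₃ satisfies ∂³F₃/∂s²∂λ + ∂²F₃/∂λ² + (4/3)·∂²F₃/∂s∂r − 8·∂²F₃/∂s²
    − 16·∂F₃/∂λ + 64·F₃ = 0 everywhere
    (the relation α²β + β² + (4/3)αγ − 8α² − 16β + 64). -/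
theorem F₃_pde_second_relation (s l r : ℝ) :
    iteratedDeriv 2 (fun s' => deriv (fun l' => F₃ s' l' r) l) s
      + iteratedDeriv 2 (fun l' => F₃ s l' r) l
      + (4 / 3) * deriv (fun s' => deriv (fun r' => F₃ s' l r') r) s
      - 8 * iteratedDeriv 2 (fun s' => F₃ s' l r) s
      - 16 * deriv (fun l' => F₃ s l' r) l
      + 64 * F₃ s l r = 0 := by
  rw [iteratedDeriv_two_deriv_F₃_l, iteratedDeriv_two_F₃_l, deriv_deriv_F₃_r,
    iteratedDeriv_two_F₃_s, deriv_F₃_l, F₃]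
  ring
end

section
/- The function F₃ : ℝ³ → ℝ defined by F₃(s,λ,r) = (1/2048)·cos(8s)·e^{8λ} + (3/128)·cosh(4s)·e^{−8λ} − (1/32)·(s·sinh(4s) − 4λ·cosh(4s) + 12r·sinh(4s))·e^{−8λ} − (49/2048 − λ/4 + (3/64)·(16r − s)² + λ²)·e^{8λ} satisfies the partial differential equation ∂³F₃/∂s²∂r + ∂²F₃/∂λ∂r − 8·∂F₃/∂r = 0 at every point of ℝ³. -/
/-! Only `∂F₃/∂r = -(3/8)·sinh(4s)·e^{-8λ} - (3/2)·(16r - s)·e^{8λ}` enters the equation, and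
`∂²/∂s² + ∂/∂λ - 8` annihilates both of its terms: on `sinh(4s)·e^{-8λ}` it acts as
`16 - 8 - 8 = 0`, on the `s`-affine term `(16r - s)·e^{8λ}` as `0 + 8 - 8 = 0`. -/

open Real

lemma hasDerivAt_sinh_mul (a x : ℝ) :
    HasDerivAt (fun x => sinh (a * x)) (a * cosh (a * x)) x := by
  simpa [mul_comm] using ((hasDerivAt_id x).const_mul a).sinh

lemma hasDerivAt_cosh_mul (a x : ℝ) :
    HasDerivAt (fun x => cosh (a * x)) (a * sinh (a * x)) x := by
  simpa [mul_comm] using ((hasDerivAt_id x).const_mul a).cosh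

lemma hasDerivAt_exp_mul (a x : ℝ) :
    HasDerivAt (fun x => exp (a * x)) (a * exp (a * x)) x := by
  simpa [mul_comm] using ((hasDerivAt_id x).const_mul a).exp

noncomputable def F₃_dr (s l r : ℝ) : ℝ :=
  -(3 / 8) * sinh (4 * s) * exp (-8 * l) - (3 / 2) * (16 * r - s) * exp (8 * l)

lemma hasDerivAt_F₃_r (s l r : ℝ) : HasDerivAt (F₃ s l) (F₃_dr s l r) r := by
  have hsq : HasDerivAt (fun r' => (16 * r' - s) ^ 2) (2 * (16 * r - s) * 16) r := by
    simpa using (((hasDerivAt_id r).const_mul 16).sub_const s).fun_pow 2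
  have hlin : HasDerivAt (fun r' => 12 * r' * sinh (4 * s)) (12 * sinh (4 * s)) r := by
    simpa using ((hasDerivAt_id r).const_mul 12).mul_const (sinh (4 * s))
  exact ((((hlin.const_add _).const_mul _).mul_const _).const_sub _).fun_sub
    ((((hsq.const_mul _).const_add _).add_const _).mul_const _) |>.congr_deriv
    (by unfold F₃_dr; ring)

lemma deriv_F₃_r_s15 (s l r : ℝ) : deriv (F₃ s l) r = F₃_dr s l r :=
  (hasDerivAt_F₃_r s l r).deriv

lemma deriv_F₃_dr_s (l r : ℝ) :
    deriv (fun s => F₃_dr s l r)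
      = fun s => -(3 / 2) * cosh (4 * s) * exp (-8 * l) + (3 / 2) * exp (8 * l) := by
  funext s
  refine ((((hasDerivAt_sinh_mul 4 s).const_mul _).mul_const _).fun_sub
    ((((hasDerivAt_id s).const_sub _).const_mul _).mul_const _)).deriv.trans ?_
  ring

lemma iteratedDeriv_two_F₃_dr_s (s l r : ℝ) :
    iteratedDeriv 2 (fun s => F₃_dr s l r) s = -6 * sinh (4 * s) * exp (-8 * l) := by
  rw [iteratedDeriv_succ', iteratedDeriv_one, deriv_F₃_dr_s]
  refine ((((hasDerivAt_cosh_mul 4 s).const_mul _).mul_const _).add_const _).deriv.trans ?_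
  ring

lemma deriv_F₃_dr_l (s l r : ℝ) :
    deriv (fun l => F₃_dr s l r) l
      = 3 * sinh (4 * s) * exp (-8 * l) - 12 * (16 * r - s) * exp (8 * l) := by
  refine (((hasDerivAt_exp_mul (-8) l).const_mul _).fun_sub
    ((hasDerivAt_exp_mul 8 l).const_mul _)).deriv.trans ?_
  ring

/-- F₃ satisfies ∂³F₃/∂s²∂r + ∂²F₃/∂λ∂r − 8·∂F₃/∂r = 0 everywhere
    (the relation α²γ + βγ − 8γ). -/
theorem F₃_pde_third_relation (s l r : ℝ) :
    iteratedDeriv 2 (fun s' => deriv (fun r' => F₃ s' l r') r) s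
      + deriv (fun l' => deriv (fun r' => F₃ s l' r') r) l
      - 8 * deriv (fun r' => F₃ s l r') r = 0 := by
  simp only [deriv_F₃_r_s15]
  rw [iteratedDeriv_two_F₃_dr_s, deriv_F₃_dr_l, F₃_dr]
  ring
end
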